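/- The gradient of V does not vanish at any point of D, where V is regarded as the harmonic function (x,y,z) ↦ V(√(x²+y²), z) on D = ℝ³ ∖ {(0,0,z) : 0 ≤ z ≤ L}. Moreover, for every α ∈ [0, π/2), writing D_α = {(r,z) : r > 0 or z ≤ 0, with z ≤ tan(α)·r}, one has V(r,z) ≤ sec(α)·V(0,0) for all (r,z) ∈ D_α, and V(r,z) → V(0,0) as (r,z) → (0,0) with (r,z) ∈ D_α; i.e. V is continuous at (0,0) as a function on D_α ∪ {(0,0)}. -/

import Mathlib

open MeasureTheory Filter Topology Set intervalIntegral

noncomputable section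

/-- The potential of a thin rod `{(0,0,ζ) : 0 ≤ ζ ≤ L}` with mass density `ρ`,
in cylindrical coordinates `(r, z)`:
`V(r,z) = ∫_0^L ρ(ζ)/√((ζ-z)² + r²) dζ`. -/
def rodV (L : ℝ) (ρ : ℝ → ℝ) (r z : ℝ) : ℝ :=
  ∫ ζ in (0:ℝ)..L, ρ ζ / Real.sqrt ((ζ - z) ^ 2 + r ^ 2)

end

/-- The rod potential as a harmonic function on
`D = ℝ³ ∖ {(0,0,ζ) : 0 ≤ ζ ≤ L}`. -/
noncomputable def rodV3 (L : ℝ) (ρ : ℝ → ℝ) (x : EuclideanSpace ℝ (Fin 3)) : ℝ :=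
  rodV L ρ (Real.sqrt ((x 0) ^ 2 + (x 1) ^ 2)) (x 2)

/-- The complement of the rod in `ℝ³`. -/
def rodCompl (L : ℝ) : Set (EuclideanSpace ℝ (Fin 3)) :=
  {x | ¬ (x 0 = 0 ∧ x 1 = 0 ∧ x 2 ∈ Icc 0 L)}

/-- The sector `D_α = {(r,z) ∈ D : z ≤ tan(α)·r}` (in cylindrical coordinates). -/
def rodSector (α : ℝ) : Set (ℝ × ℝ) :=
  {p | 0 ≤ p.1 ∧ p.2 ≤ Real.tan α * p.1 ∧ p ≠ (0, 0)}


section Aux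
open MeasureTheory Filter Topology Set intervalIntegral

lemma sqrt_ge (α r z ζ : ℝ) (hα : α ∈ Ico 0 (Real.pi/2)) (hr : 0 ≤ r)
    (hz : z ≤ Real.tan α * r) (hζ : 0 < ζ) :
    Real.cos α * ζ ≤ Real.sqrt ((ζ - z)^2 + r^2) := by
  have hc : 0 < Real.cos α := Real.cos_pos_of_mem_Ioo
    ⟨by linarith [hα.1, Real.pi_pos], hα.2⟩
  have hs : 0 ≤ Real.sin α := Real.sin_nonneg_of_nonneg_of_le_pi hα.1
    (by linarith [hα.2, Real.pi_pos])
  set s := Real.sin α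
  set c := Real.cos α
  have h1 : z * c ≤ r * s := by
    have := mul_le_mul_of_nonneg_right hz hc.le
    rw [Real.tan_eq_sin_div_cos] at this
    calc z * c ≤ s / c * r * c := this
    _ = r * s := by field_simp
  have hsc : s^2 + c^2 = 1 := Real.sin_sq_add_cos_sq α
  rw [show Real.cos α * ζ = c * ζ from rfl, ← Real.sqrt_sq (by positivity : 0 ≤ c * ζ)]
  apply Real.sqrt_le_sqrt
  have h2 : (r*c + (z-ζ)*s)^2 + (r*s - (z-ζ)*c)^2 = (ζ-z)^2 + r^2 := by
    linear_combination ((z-ζ)^2 + r^2) * hsc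
  nlinarith [sq_nonneg (r*c + (z-ζ)*s), mul_nonneg (sub_nonneg.2 h1)
    (by positivity : (0:ℝ) ≤ ζ * c), sq_nonneg (r*s - z*c)]


section Part2
variable {L : ℝ} (hL : 0 < L) {ρ : ℝ → ℝ} (hρc : ContinuousOn ρ (Icc 0 L))
  (hρ0 : ρ 0 = 0) (hρpos : ∀ ζ ∈ Ioc 0 L, 0 < ρ ζ)

include hρ0 in
lemma rodV00 (hL0 : 0 ≤ L) : rodV L ρ 0 0 = ∫ ζ in (0:ℝ)..L, ρ ζ / ζ := by
  apply intervalIntegral.integral_congr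
  intro ζ hζ
  rw [uIcc_of_le hL0] at hζ
  rcases eq_or_lt_of_le hζ.1 with h | h
  · simp [← h, hρ0]
  · have : Real.sqrt ((ζ - 0)^2 + 0^2) = ζ := by
      rw [sub_zero]; simpa using Real.sqrt_sq h.le
    simp only [this]

-- denominator positivity on sector
lemma den_pos {α : ℝ} (hα : α ∈ Ico 0 (Real.pi/2)) {p : ℝ × ℝ} (hp : p ∈ rodSector α)
    {ζ : ℝ} (hζ : 0 ≤ ζ) : 0 < (ζ - p.2)^2 + p.1^2 := by
  obtain ⟨hr, hz, hne⟩ := hp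
  rcases eq_or_lt_of_le hζ with h | h
  · subst h
    rcases eq_or_lt_of_le hr with h1 | h1
    · have hz0 : p.2 ≠ 0 := by
        intro h2; exact hne (Prod.ext h1.symm h2)
      have h4 : 0 < p.2^2 := by
        have := abs_pos.mpr hz0
        nlinarith [sq_abs p.2]
      nlinarith [sq_nonneg p.1]
    · positivity
  · have := sqrt_ge α p.1 p.2 ζ hα hr hz h
    have hc : 0 < Real.cos α := Real.cos_pos_of_mem_Ioo
      ⟨by linarith [hα.1, Real.pi_pos], hα.2⟩
    have : 0 < Real.sqrt ((ζ - p.2)^2 + p.1^2) := lt_of_lt_of_le (by positivity) this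
    exact Real.sqrt_pos.mp this

include hρc hρ0 hρpos hL in
lemma part2 {α : ℝ} (hα : α ∈ Ico 0 (Real.pi/2))
    (hcrit : IntervalIntegrable (fun ζ => ρ ζ / ζ) volume 0 L)
    {p : ℝ × ℝ} (hp : p ∈ rodSector α) :
    rodV L ρ p.1 p.2 ≤ (Real.cos α)⁻¹ * rodV L ρ 0 0 := by
  have hc : 0 < Real.cos α := Real.cos_pos_of_mem_Ioo
    ⟨by linarith [hα.1, Real.pi_pos], hα.2⟩
  rw [rodV00 hρ0 hL.le, ← intervalIntegral.integral_const_mul]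
  apply intervalIntegral.integral_mono_on hL.le
  · apply ContinuousOn.intervalIntegrable
    rw [uIcc_of_le hL.le]
    apply hρc.div
    · fun_prop
    · intro ζ hζ
      exact Real.sqrt_ne_zero'.mpr (den_pos hα hp hζ.1)
  · exact hcrit.const_mul _
  · intro ζ hζ
    rcases eq_or_lt_of_le hζ.1 with h | h
    · simp [← h, hρ0]
    · have hρnn : 0 ≤ ρ ζ := (hρpos ζ ⟨h, hζ.2⟩).le
      have hge := sqrt_ge α p.1 p.2 ζ hα hp.1 hp.2.1 h
      calc ρ ζ / Real.sqrt ((ζ - p.2)^2 + p.1^2) ≤ ρ ζ / (Real.cos α * ζ) :=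
            div_le_div_of_nonneg_left hρnn (by positivity) hge
      _ = (Real.cos α)⁻¹ * (ρ ζ / ζ) := by
          rw [mul_comm (Real.cos α) ζ, ← div_div, div_eq_mul_inv (ρ ζ / ζ), mul_comm]
  
end Part2

section Part3
variable {L : ℝ} (hL : 0 < L) {ρ : ℝ → ℝ} (hρc : ContinuousOn ρ (Icc 0 L))
  (hρ0 : ρ 0 = 0) (hρpos : ∀ ζ ∈ Ioc 0 L, 0 < ρ ζ)

include hL hρc hρ0 hρpos in
lemma part3 {α : ℝ} (hα : α ∈ Ico 0 (Real.pi/2))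
    (hcrit : IntervalIntegrable (fun ζ => ρ ζ / ζ) volume 0 L) :
    Tendsto (fun p : ℝ × ℝ => rodV L ρ p.1 p.2) (𝓝[rodSector α] (0, 0))
      (𝓝 (rodV L ρ 0 0)) := by
  have hc : 0 < Real.cos α := Real.cos_pos_of_mem_Ioo
    ⟨by linarith [hα.1, Real.pi_pos], hα.2⟩
  have hVform : ∀ p : ℝ × ℝ, rodV L ρ p.1 p.2
      = ∫ ζ in Ioc (0:ℝ) L, ρ ζ / Real.sqrt ((ζ - p.2)^2 + p.1^2) := by
    intro p
    rw [rodV, intervalIntegral.integral_of_le hL.le]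
  have hVal : rodV L ρ 0 0 = ∫ ζ in Ioc (0:ℝ) L, ρ ζ / ζ := by
    rw [rodV00 hρ0 hL.le, intervalIntegral.integral_of_le hL.le]
  simp only [hVform, hVal]
  apply MeasureTheory.tendsto_integral_filter_of_dominated_convergence
    (fun ζ => (Real.cos α)⁻¹ * (ρ ζ / ζ))
  · filter_upwards [eventually_mem_nhdsWithin] with p hp
    apply ContinuousOn.aestronglyMeasurable _ measurableSet_Ioc
    apply ContinuousOn.div (hρc.mono Ioc_subset_Icc_self)
    · fun_prop
    · intro ζ hζ
      exact Real.sqrt_ne_zero'.mpr (den_pos hα hp hζ.1.le)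
  · filter_upwards [eventually_mem_nhdsWithin] with p hp
    rw [ae_restrict_iff' measurableSet_Ioc]
    filter_upwards with ζ hζ
    have hρnn : 0 ≤ ρ ζ := (hρpos ζ hζ).le
    have hge := sqrt_ge α p.1 p.2 ζ hα hp.1 hp.2.1 hζ.1
    rw [Real.norm_of_nonneg (div_nonneg hρnn (Real.sqrt_nonneg _))]
    calc ρ ζ / Real.sqrt ((ζ - p.2)^2 + p.1^2) ≤ ρ ζ / (Real.cos α * ζ) :=
          div_le_div_of_nonneg_left hρnn (mul_pos hc hζ.1) hge
    _ = (Real.cos α)⁻¹ * (ρ ζ / ζ) := by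
        rw [mul_comm (Real.cos α) ζ, ← div_div, div_eq_mul_inv (ρ ζ / ζ), mul_comm]
  · exact (hcrit.const_mul _).1
  · rw [ae_restrict_iff' measurableSet_Ioc]
    filter_upwards with ζ hζ
    have h1 : Tendsto (fun p : ℝ × ℝ => ρ ζ / Real.sqrt ((ζ - p.2)^2 + p.1^2))
        (𝓝 ((0:ℝ), (0:ℝ))) (𝓝 (ρ ζ / Real.sqrt ((ζ - 0)^2 + 0^2))) := by
      apply ContinuousAt.tendsto
      apply ContinuousAt.div continuousAt_const
      · fun_prop
      · apply Real.sqrt_ne_zero'.mpr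
        simp only [sub_zero]
        nlinarith [hζ.1, sq_nonneg ζ]
    have h2 : Real.sqrt ((ζ - 0)^2 + 0^2) = ζ := by
      rw [sub_zero]; simpa using Real.sqrt_sq hζ.1.le
    rw [h2] at h1
    exact h1.mono_left nhdsWithin_le_nhds
end Part3


section Part1

abbrev E3 := EuclideanSpace ℝ (Fin 3)

noncomputable section AuxDefs

def gfun (ζ : ℝ) (y : E3) : ℝ := (ζ - y 2)^2 + ((y 0)^2 + (y 1)^2)

def ptE (ζ : ℝ) : E3 := (WithLp.equiv 2 (Fin 3 → ℝ)).symm ![0, 0, ζ]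

lemma sqrt_gfun_eq (ζ : ℝ) (y : E3) : Real.sqrt (gfun ζ y) = ‖y - ptE ζ‖ := by
  rw [EuclideanSpace.norm_eq]
  congr 1
  simp [gfun, ptE, Fin.sum_univ_three, WithLp.equiv_symm_apply, PiLp.toLp_apply, Real.norm_eq_abs, sq_abs]
  ring

lemma coord_le_norm (w : E3) (i : Fin 3) : |w i| ≤ ‖w‖ := by
  rw [EuclideanSpace.norm_eq, ← Real.sqrt_sq_eq_abs]
  apply Real.sqrt_le_sqrt
  have h1 : ‖w i‖ ^ 2 ≤ ∑ j, ‖w j‖ ^ 2 :=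
    Finset.single_le_sum (f := fun j => ‖w j‖^2)
      (fun j _ => by positivity) (Finset.mem_univ i)
  rw [Real.norm_eq_abs, sq_abs] at h1
  exact h1

def DgE (ζ : ℝ) (y : E3) : E3 →L[ℝ] ℝ :=
  (2 * (y 2 - ζ)) • EuclideanSpace.proj 2
    + ((2 * y 0) • EuclideanSpace.proj 0 + (2 * y 1) • EuclideanSpace.proj 1)

lemma hasFDerivAt_gfun (ζ : ℝ) (y : E3) : HasFDerivAt (gfun ζ) (DgE ζ y) y := by
  have h0 : HasFDerivAt (fun y : E3 => y 0) (EuclideanSpace.proj (𝕜 := ℝ) 0) y :=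
    (EuclideanSpace.proj (𝕜 := ℝ) (0 : Fin 3)).hasFDerivAt
  have h1 : HasFDerivAt (fun y : E3 => y 1) (EuclideanSpace.proj (𝕜 := ℝ) 1) y :=
    (EuclideanSpace.proj (𝕜 := ℝ) (1 : Fin 3)).hasFDerivAt
  have h2 : HasFDerivAt (fun y : E3 => y 2) (EuclideanSpace.proj (𝕜 := ℝ) 2) y :=
    (EuclideanSpace.proj (𝕜 := ℝ) (2 : Fin 3)).hasFDerivAt
  have hsub := (hasFDerivAt_const ζ y).sub h2
  have hA := (hsub.mul hsub).add ((h0.mul h0).add (h1.mul h1))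
  have hfe : (fun x : E3 => (ζ - x 2) * (ζ - x 2) + (x 0 * x 0 + x 1 * x 1)) = gfun ζ := by
    funext x; simp only [gfun]; ring
  change HasFDerivAt (fun x : E3 => (ζ - x 2) * (ζ - x 2) + (x 0 * x 0 + x 1 * x 1)) _ y at hA
  rw [hfe] at hA
  refine hA.congr_fderiv ?_
  ext w
  simp [DgE]
  ring

def FdE (ρ : ℝ → ℝ) (ζ : ℝ) (y : E3) : E3 →L[ℝ] ℝ :=
  (ρ ζ * (-(Real.sqrt (gfun ζ y) ^ 2)⁻¹ * (1 / (2 * Real.sqrt (gfun ζ y))))) • DgE ζ y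

lemma hasFDerivAt_FdE (ρ : ℝ → ℝ) (ζ : ℝ) (y : E3) (hg : 0 < gfun ζ y) :
    HasFDerivAt (fun y => ρ ζ / Real.sqrt (gfun ζ y)) (FdE ρ ζ y) y := by
  have hsne : Real.sqrt (gfun ζ y) ≠ 0 := (Real.sqrt_pos.mpr hg).ne'
  have hsqrt : HasFDerivAt (fun y : E3 => Real.sqrt (gfun ζ y))
      ((1 / (2 * Real.sqrt (gfun ζ y))) • DgE ζ y) y :=
    (Real.hasDerivAt_sqrt hg.ne').comp_hasFDerivAt y (hasFDerivAt_gfun ζ y)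
  have hinv := (hasDerivAt_inv hsne).comp_hasFDerivAt y hsqrt
  have hm := hinv.const_mul (ρ ζ)
  have heq : (fun y : E3 => ρ ζ * ((fun y => y⁻¹) ∘ fun y : E3 => Real.sqrt (gfun ζ y)) y)
      = fun y : E3 => ρ ζ / Real.sqrt (gfun ζ y) := by
    funext y; simp [Function.comp, div_eq_mul_inv]
  rw [heq] at hm
  refine hm.congr_fderiv ?_
  rw [FdE, smul_smul, smul_smul]
  ring_nf


end AuxDefs

lemma rodV3_eq (L : ℝ) (ρ : ℝ → ℝ) (y : E3) :
    rodV3 L ρ y = ∫ ζ in (0:ℝ)..L, ρ ζ / Real.sqrt (gfun ζ y) := by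
  unfold rodV3 rodV
  apply intervalIntegral.integral_congr
  intro ζ _
  congr 2
  rw [Real.sq_sqrt (by positivity)]
  rfl

set_option maxHeartbeats 1000000 in
lemma part1 {L : ℝ} (hL : 0 < L) {ρ : ℝ → ℝ} (hρc : ContinuousOn ρ (Icc 0 L))
    (hρpos : ∀ ζ ∈ Ioc 0 L, 0 < ρ ζ) {x : E3} (hx : x ∈ rodCompl L) :
    fderiv ℝ (rodV3 L ρ) x ≠ 0 := by
  have hx' : ¬ (x 0 = 0 ∧ x 1 = 0 ∧ x 2 ∈ Icc 0 L) := hx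
  -- positivity of gfun along the rod parameter
  have hgpos : ∀ ζ ∈ Icc 0 L, 0 < gfun ζ x := by
    intro ζ hζ
    rcases lt_or_eq_of_le (by unfold gfun; positivity : (0:ℝ) ≤ gfun ζ x) with h | h
    · exact h
    exfalso
    have e : (ζ - x 2)^2 + ((x 0)^2 + (x 1)^2) = 0 := by
      rw [show (ζ - x 2)^2 + ((x 0)^2 + (x 1)^2) = gfun ζ x from rfl, ← h]
    have h0 : x 0 = 0 := by
      have : (x 0)^2 = 0 := by nlinarith [sq_nonneg (ζ - x 2), sq_nonneg (x 1)]
      exact pow_eq_zero_iff (by norm_num) |>.mp this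
    have h1 : x 1 = 0 := by
      have : (x 1)^2 = 0 := by nlinarith [sq_nonneg (ζ - x 2), sq_nonneg (x 0)]
      exact pow_eq_zero_iff (by norm_num) |>.mp this
    have h2 : x 2 = ζ := by
      have : (ζ - x 2)^2 = 0 := by nlinarith [sq_nonneg (x 0), sq_nonneg (x 1)]
      have := pow_eq_zero_iff (n := 2) (by norm_num) |>.mp this
      linarith
    exact hx' ⟨h0, h1, by rw [h2]; exact hζ⟩
  -- the minimum distance to the rod
  obtain ⟨ζ₀, hζ₀, hminon⟩ := (isCompact_Icc (a := (0:ℝ)) (b := L)).exists_isMinOn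
    (nonempty_Icc.mpr hL.le)
    (Real.continuous_sqrt.comp (by unfold gfun; fun_prop) : Continuous fun ζ : ℝ =>
      Real.sqrt (gfun ζ x)).continuousOn
  set m := Real.sqrt (gfun ζ₀ x) with hmdef
  have hm : 0 < m := Real.sqrt_pos.mpr (hgpos ζ₀ hζ₀)
  have hm2 : 0 < m/2 := half_pos hm
  have hmle : ∀ ζ ∈ Icc 0 L, m ≤ Real.sqrt (gfun ζ x) := fun ζ hζ => hminon hζ
  have hball : ∀ ζ ∈ Icc 0 L, ∀ y ∈ Metric.ball x (m/2), m/2 ≤ Real.sqrt (gfun ζ y) := by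
    intro ζ hζ y hy
    have h1 := hmle ζ hζ
    rw [sqrt_gfun_eq] at h1 ⊢
    have h2 : ‖x - ptE ζ‖ - ‖x - y‖ ≤ ‖y - ptE ζ‖ := by
      have h3 := norm_sub_norm_le (x - ptE ζ) (x - y)
      have h4 : (x - ptE ζ) - (x - y) = y - ptE ζ := by abel
      rw [h4] at h3
      linarith
    have h5 : ‖x - y‖ < m/2 := by
      rw [← dist_eq_norm]
      exact Metric.mem_ball'.mp hy
    linarith
  have hgpos' : ∀ ζ ∈ Icc 0 L, ∀ y ∈ Metric.ball x (m/2), 0 < gfun ζ y := by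
    intro ζ hζ y hy
    exact Real.sqrt_pos.mp (lt_of_lt_of_le hm2 (hball ζ hζ y hy))
  -- continuity in ζ of the would-be derivative
  have hc0 : Continuous fun ζ : ℝ => Real.sqrt (gfun ζ x) :=
    Real.continuous_sqrt.comp (by unfold gfun; fun_prop)
  have hcs : ContinuousOn
      (fun ζ => -(Real.sqrt (gfun ζ x)^2)⁻¹ * (1/(2*Real.sqrt (gfun ζ x)))) (Icc 0 L) := by
    apply ContinuousOn.mul
    · apply ContinuousOn.neg
      apply ContinuousOn.inv₀ ((hc0.pow 2).continuousOn)
      intro ζ hζ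
      exact pow_ne_zero _ (Real.sqrt_pos.mpr (hgpos ζ hζ)).ne'
    · apply ContinuousOn.div continuousOn_const ((continuous_const.mul hc0).continuousOn)
      intro ζ hζ
      exact (mul_pos two_pos (Real.sqrt_pos.mpr (hgpos ζ hζ))).ne'
  have hcD : Continuous fun ζ : ℝ => DgE ζ x := by
    unfold DgE
    exact ((continuous_const.mul (continuous_const.sub continuous_id)).smul
      continuous_const).add continuous_const
  have hF'cont : ContinuousOn (fun ζ => FdE ρ ζ x) (Icc 0 L) := by
    unfold FdE
    exact (hρc.mul hcs).smul hcD.continuousOn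
  -- hypotheses for differentiation under the integral sign
  have hmeas : ∀ᶠ y in 𝓝 x, AEStronglyMeasurable (fun ζ => ρ ζ / Real.sqrt (gfun ζ y))
      (volume.restrict (Set.uIoc (0:ℝ) L)) := by
    filter_upwards [Metric.ball_mem_nhds x hm2] with y hy
    rw [uIoc_of_le hL.le]
    apply ContinuousOn.aestronglyMeasurable _ measurableSet_Ioc
    apply ContinuousOn.div (hρc.mono Ioc_subset_Icc_self)
    · exact (Real.continuous_sqrt.comp
        (show Continuous fun ζ : ℝ => gfun ζ y by unfold gfun; fun_prop)).continuousOn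
    · intro ζ hζ
      exact (lt_of_lt_of_le hm2 (hball ζ (Ioc_subset_Icc_self hζ) y hy)).ne'
  have hint : IntervalIntegrable (fun ζ => ρ ζ / Real.sqrt (gfun ζ x)) volume 0 L := by
    apply ContinuousOn.intervalIntegrable
    rw [uIcc_of_le hL.le]
    apply ContinuousOn.div hρc hc0.continuousOn
    intro ζ hζ
    exact (Real.sqrt_pos.mpr (hgpos ζ hζ)).ne'
  have hmeas' : AEStronglyMeasurable (fun ζ => FdE ρ ζ x)
      (volume.restrict (Set.uIoc (0:ℝ) L)) := by
    rw [uIoc_of_le hL.le]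
    exact (hF'cont.mono Ioc_subset_Icc_self).aestronglyMeasurable measurableSet_Ioc
  have hbnd : ∀ᵐ t : ℝ ∂volume, t ∈ Set.uIoc (0:ℝ) L → ∀ y ∈ Metric.ball x (m/2),
      ‖FdE ρ t y‖ ≤ |ρ t| * (((m/2)^2)⁻¹ * (m/2)⁻¹ * (2*(3*(‖x‖ + m/2) + L))) := by
    filter_upwards with ζ hζ y hy
    rw [uIoc_of_le hL.le] at hζ
    have hζ' : ζ ∈ Icc 0 L := Ioc_subset_Icc_self hζ
    have hs2 : m/2 ≤ Real.sqrt (gfun ζ y) := hball ζ hζ' y hy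
    have hsg : 0 < Real.sqrt (gfun ζ y) := lt_of_lt_of_le hm2 hs2
    have hynorm : ‖y‖ ≤ ‖x‖ + m/2 := by
      have h6 : ‖y - x‖ < m/2 := mem_ball_iff_norm.mp hy
      have h7 : ‖y‖ - ‖x‖ ≤ ‖y - x‖ := norm_sub_norm_le y x
      linarith
    have hDg : ‖DgE ζ y‖ ≤ 2*(3*(‖x‖ + m/2) + L) := by
      apply ContinuousLinearMap.opNorm_le_bound _ (by positivity)
      intro w
      have e : DgE ζ y w = 2*(y 2 - ζ) * w 2 + (2 * y 0 * w 0 + 2 * y 1 * w 1) := by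
        simp [DgE]
      rw [e, Real.norm_eq_abs]
      have t1 : |2*(y 2 - ζ) * w 2| ≤ 2*((‖x‖ + m/2) + L)*‖w‖ := by
        rw [abs_mul, abs_mul, abs_two]
        have hy2 : |y 2 - ζ| ≤ (‖x‖ + m/2) + L := by
          have h8 := coord_le_norm y 2
          have hζabs : |ζ| ≤ L := abs_le.mpr ⟨by linarith [hζ'.1], hζ'.2⟩
          calc |y 2 - ζ| ≤ |y 2| + |ζ| := abs_sub _ _
          _ ≤ (‖x‖ + m/2) + L := by
              have := abs_le.mp hζabs
              linarith
        gcongr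
        exact coord_le_norm w 2
      have t2 : |2 * y 0 * w 0| ≤ 2*(‖x‖ + m/2)*‖w‖ := by
        rw [abs_mul, abs_mul, abs_two]
        gcongr
        · linarith [coord_le_norm y 0]
        · exact coord_le_norm w 0
      have t3 : |2 * y 1 * w 1| ≤ 2*(‖x‖ + m/2)*‖w‖ := by
        rw [abs_mul, abs_mul, abs_two]
        gcongr
        · linarith [coord_le_norm y 1]
        · exact coord_le_norm w 1
      calc |2*(y 2 - ζ) * w 2 + (2 * y 0 * w 0 + 2 * y 1 * w 1)|
          ≤ |2*(y 2 - ζ) * w 2| + (|2 * y 0 * w 0| + |2 * y 1 * w 1|) :=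
            le_trans (abs_add_le _ _) (by gcongr; exact abs_add_le _ _)
      _ ≤ 2*((‖x‖ + m/2) + L)*‖w‖ + (2*(‖x‖ + m/2)*‖w‖ + 2*(‖x‖ + m/2)*‖w‖) :=
            add_le_add t1 (add_le_add t2 t3)
      _ = 2*(3*(‖x‖ + m/2) + L)*‖w‖ := by ring
    have i1 : ((Real.sqrt (gfun ζ y))^2)⁻¹ ≤ ((m/2)^2)⁻¹ := by
      apply inv_anti₀ (by positivity)
      exact pow_le_pow_left₀ hm2.le hs2 2
    have i2 : 1/(2*Real.sqrt (gfun ζ y)) ≤ (m/2)⁻¹ := by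
      rw [one_div]
      apply inv_anti₀ hm2
      nlinarith
    have habs : |(-(Real.sqrt (gfun ζ y)^2)⁻¹ * (1/(2*Real.sqrt (gfun ζ y))))|
        ≤ ((m/2)^2)⁻¹ * (m/2)⁻¹ := by
      rw [abs_mul, abs_neg, abs_of_nonneg (by positivity), abs_of_nonneg (by positivity)]
      exact mul_le_mul i1 i2 (by positivity) (by positivity)
    have hns : ‖FdE ρ ζ y‖ = |ρ ζ| * |(-(Real.sqrt (gfun ζ y)^2)⁻¹ *
        (1/(2*Real.sqrt (gfun ζ y))))| * ‖DgE ζ y‖ := by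
      rw [FdE]
      rw [norm_smul (ρ ζ * (-(Real.sqrt (gfun ζ y)^2)⁻¹ *
        (1/(2*Real.sqrt (gfun ζ y))))) (DgE ζ y)]
      rw [Real.norm_eq_abs, abs_mul]
    rw [hns]
    calc |ρ ζ| * |(-(Real.sqrt (gfun ζ y)^2)⁻¹ * (1/(2*Real.sqrt (gfun ζ y))))| * ‖DgE ζ y‖
        ≤ |ρ ζ| * (((m/2)^2)⁻¹ * (m/2)⁻¹) * (2*(3*(‖x‖ + m/2) + L)) := by
          apply mul_le_mul _ hDg (norm_nonneg _) (by positivity)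
          exact mul_le_mul_of_nonneg_left habs (abs_nonneg _)
    _ = |ρ ζ| * (((m/2)^2)⁻¹ * (m/2)⁻¹ * (2*(3*(‖x‖ + m/2) + L))) := by ring
  have hbi : IntervalIntegrable
      (fun ζ => |ρ ζ| * (((m/2)^2)⁻¹ * (m/2)⁻¹ * (2*(3*(‖x‖ + m/2) + L)))) volume 0 L := by
    apply ContinuousOn.intervalIntegrable
    rw [uIcc_of_le hL.le]
    exact (hρc.abs).mul continuousOn_const
  have hdiff : ∀ᵐ t : ℝ ∂volume, t ∈ Set.uIoc (0:ℝ) L → ∀ y ∈ Metric.ball x (m/2),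
      HasFDerivAt (fun y => ρ t / Real.sqrt (gfun t y)) (FdE ρ t y) y := by
    filter_upwards with ζ hζ y hy
    rw [uIoc_of_le hL.le] at hζ
    exact hasFDerivAt_FdE ρ ζ y (hgpos' ζ (Ioc_subset_Icc_self hζ) y hy)
  have key := intervalIntegral.hasFDerivAt_integral_of_dominated_of_fderiv_le
    (F := fun (y : E3) ζ => ρ ζ / Real.sqrt (gfun ζ y))
    (F' := fun (y : E3) ζ => FdE ρ ζ y)
    (Metric.ball_mem_nhds x hm2) hmeas hint hmeas' hbnd hbi hdiff
  -- identify the derivative of rodV3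
  have hfun : rodV3 L ρ = fun y => ∫ ζ in (0:ℝ)..L, ρ ζ / Real.sqrt (gfun ζ y) :=
    funext (rodV3_eq L ρ)
  have key2 : HasFDerivAt (rodV3 L ρ) (∫ ζ in (0:ℝ)..L, FdE ρ ζ x) x := by
    rw [hfun]; exact key
  -- the test direction
  set m2 := max 0 (min L (x 2)) with hm2def
  obtain ⟨v, hv0, hv1, hv2⟩ : ∃ v : E3, v 0 = x 0 ∧ v 1 = x 1 ∧ v 2 = x 2 - m2 :=
    ⟨(WithLp.equiv 2 (Fin 3 → ℝ)).symm ![x 0, x 1, x 2 - m2],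
      by rw [WithLp.equiv_symm_apply]; simp,
      by rw [WithLp.equiv_symm_apply]; simp,
      by rw [WithLp.equiv_symm_apply]; simp⟩
  have hEval : ∀ ζ, FdE ρ ζ x v
      = ρ ζ * (-(Real.sqrt (gfun ζ x)^2)⁻¹ * (1/(2*Real.sqrt (gfun ζ x)))) *
        (2*((x 0)^2 + (x 1)^2 + (x 2 - ζ)*(x 2 - m2))) := by
    intro ζ
    simp [FdE, DgE, hv0, hv1, hv2]
    ring
  have hA : ∀ ζ ∈ Icc 0 L, 0 < (x 0)^2 + (x 1)^2 + (x 2 - ζ)*(x 2 - m2) := by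
    intro ζ hζ
    rcases lt_or_ge (x 2) 0 with h | h
    · have hm20 : m2 = 0 := by
        rw [hm2def, min_eq_right (by linarith : x 2 ≤ L), max_eq_left h.le]
      rw [hm20]
      nlinarith [sq_nonneg (x 0), sq_nonneg (x 1), hζ.1]
    rcases le_or_gt (x 2) L with h2 | h2
    · have hm2x : m2 = x 2 := by
        rw [hm2def, min_eq_right h2, max_eq_right h]
      rw [hm2x, sub_self, mul_zero, add_zero]
      by_contra hle
      push_neg at hle
      have h0 : x 0 = 0 := by nlinarith [sq_nonneg (x 0), sq_nonneg (x 1)]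
      have h1 : x 1 = 0 := by nlinarith [sq_nonneg (x 0), sq_nonneg (x 1)]
      exact hx' ⟨h0, h1, h, h2⟩
    · have hm2L : m2 = L := by
        rw [hm2def, min_eq_left h2.le, max_eq_right hL.le]
      rw [hm2L]
      nlinarith [sq_nonneg (x 0), sq_nonneg (x 1), hζ.2]
  have hneg : ∀ ζ ∈ Ioo 0 L, 0 < -(FdE ρ ζ x v) := by
    intro ζ hζ
    rw [hEval]
    have hρ := hρpos ζ ⟨hζ.1, hζ.2.le⟩
    have hsg : 0 < Real.sqrt (gfun ζ x) := Real.sqrt_pos.mpr (hgpos ζ ⟨hζ.1.le, hζ.2.le⟩)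
    have hA' := hA ζ ⟨hζ.1.le, hζ.2.le⟩
    have hspos : 0 < (Real.sqrt (gfun ζ x)^2)⁻¹ * (1/(2*Real.sqrt (gfun ζ x))) := by positivity
    nlinarith [mul_pos (mul_pos hρ hspos)
      (by linarith : (0:ℝ) < 2*((x 0)^2 + (x 1)^2 + (x 2 - ζ)*(x 2 - m2)))]
  -- the directional derivative is negative
  have hIF' : IntervalIntegrable (fun ζ => FdE ρ ζ x) volume 0 L := by
    apply ContinuousOn.intervalIntegrable
    rwa [uIcc_of_le hL.le]
  have hIv : IntervalIntegrable (fun ζ => -(FdE ρ ζ x v)) volume 0 L := by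
    apply ContinuousOn.intervalIntegrable
    rw [uIcc_of_le hL.le]
    exact (((ContinuousLinearMap.apply ℝ ℝ v).continuous.comp_continuousOn hF'cont)).neg
  have hIpos := intervalIntegral.intervalIntegral_pos_of_pos_on hIv hneg hL
  rw [intervalIntegral.integral_neg] at hIpos
  have happ : (∫ ζ in (0:ℝ)..L, FdE ρ ζ x) v = ∫ ζ in (0:ℝ)..L, FdE ρ ζ x v :=
    ContinuousLinearMap.intervalIntegral_apply hIF' v
  intro hzero
  rw [key2.fderiv] at hzero
  rw [hzero, ContinuousLinearMap.zero_apply] at happ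
  rw [← happ] at hIpos
  simp at hIpos

end Part1
end Aux

/-- The gradient of `V` does not vanish at any point of `D`.
Moreover, for every `α ∈ [0, π/2)` one has `V(r,z) ≤ sec(α)·V(0,0)` on the sector
`D_α` and `V(r,z) → V(0,0)` as `(r,z) → (0,0)` within `D_α`. -/
theorem statement11
    (L : ℝ) (hL : 0 < L) (ρ : ℝ → ℝ) (hρc : ContinuousOn ρ (Icc 0 L))
    (hρ0 : ρ 0 = 0) (hρpos : ∀ ζ ∈ Ioc 0 L, 0 < ρ ζ)
    (hcrit : IntervalIntegrable (fun ζ => ρ ζ / ζ) volume 0 L) :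
    (∀ x ∈ rodCompl L, fderiv ℝ (rodV3 L ρ) x ≠ 0) ∧
    ∀ α ∈ Ico 0 (Real.pi / 2),
      (∀ p ∈ rodSector α, rodV L ρ p.1 p.2 ≤ (Real.cos α)⁻¹ * rodV L ρ 0 0) ∧
      Tendsto (fun p : ℝ × ℝ => rodV L ρ p.1 p.2) (𝓝[rodSector α] (0, 0))
        (𝓝 (rodV L ρ 0 0)) := by
  constructor
  · intro x hx
    exact part1 hL hρc hρpos hx
  · intro α hα
    refine ⟨fun p hp => part2 (hL := hL) (hρc := hρc) (hρ0 := hρ0) (hρpos := hρpos) hα hcrit hp,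
      part3 (hL := hL) (hρc := hρc) (hρ0 := hρ0) (hρpos := hρpos) hα hcrit⟩
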